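/- Let b = λ + iη with λ, η ∈ ℝ and λ > 0. The polynomials ℛₙ(b;z) = ((2λ)ₙ/(λ)ₙ) · Σ_{k=0}^{n} [(−n)ₖ(b)ₖ/((2λ)ₖ k!)] (1−z)ᵏ satisfy ℛ₀(b;z) = 1, ℛ₁(b;z) = (1 + i c₁)z + (1 − i c₁), and for n ≥ 1 the three-term recurrence ℛₙ₊₁(b;z) = [(1 + i cₙ₊₁)z + (1 − i cₙ₊₁)] ℛₙ(b;z) − 4 dₙ₊₁ z ℛₙ₋₁(b;z), where cₙ = η/(λ+n−1) and dₙ₊₁ = n(2λ+n−1)/(4(λ+n−1)(λ+n)). -/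
import Mathlib

open Complex Finset

/-- Pochhammer symbol `(a)ₖ` over ℂ. -/
noncomputable def poch (a : ℂ) (k : ℕ) : ℂ := Polynomial.eval a (ascPochhammer ℂ k)

/-- The polynomials `ℛₙ(b;z)` (hypergeometric form), with `b = λ + iη`. -/
noncomputable def RR (lam eta : ℝ) (n : ℕ) (z : ℂ) : ℂ :=
  (poch (2 * lam) n / poch (lam : ℂ) n) *
    ∑ k ∈ Finset.range (n + 1),
      poch (-(n : ℂ)) k * poch ((lam : ℂ) + (eta : ℂ) * I) k /
          (poch (2 * lam) k * (Nat.factorial k : ℂ)) * (1 - z) ^ k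

/-- `cₙ = η/(λ+n−1)`. -/
noncomputable def cSeq (lam eta : ℝ) (n : ℕ) : ℝ := eta / (lam + n - 1)

/-- `dₙ = (n−1)(2λ+n−2)/(4(λ+n−2)(λ+n−1))`, i.e. `dₙ₊₁ = n(2λ+n−1)/(4(λ+n−1)(λ+n))`. -/
noncomputable def dSeq (lam : ℝ) (n : ℕ) : ℝ :=
  (n - 1) * (2 * lam + n - 2) / (4 * (lam + n - 2) * (lam + n - 1))

lemma poch_zero (a : ℂ) : poch a 0 = 1 := by simp [poch]

lemma poch_one (a : ℂ) : poch a 1 = a := by simp [poch]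

lemma poch_succ (a : ℂ) (k : ℕ) : poch a (k+1) = poch a k * (a + k) := by
  simp [poch, ascPochhammer_succ_eval]

lemma poch_succ_left (a : ℂ) (k : ℕ) : poch a (k+1) = a * poch (a+1) k := by
  simp [poch, ascPochhammer_succ_left, Polynomial.eval_comp]

lemma poch_real_pos_ne (a : ℝ) (ha : 0 < a) (k : ℕ) : poch (a:ℂ) k ≠ 0 := by
  induction k with
  | zero => simp [poch_zero]
  | succ k ih =>
    rw [poch_succ]
    refine mul_ne_zero ih ?_
    have : ((a:ℂ) + k) = ((a + k : ℝ) : ℂ) := by push_cast; ring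
    rw [this]
    exact_mod_cast ne_of_gt (by positivity)

lemma cast_add_nat_ne (a : ℝ) (ha : 0 < a) (j : ℕ) : (a:ℂ) + j ≠ 0 := by
  have : ((a:ℂ) + j) = ((a + j : ℝ) : ℂ) := by push_cast; ring
  rw [this]
  exact_mod_cast ne_of_gt (by positivity)

lemma poch_neg_nat_eq_zero (m k : ℕ) (h : m < k) : poch (-(m:ℂ)) k = 0 := by
  induction k with
  | zero => omega
  | succ k ih =>
    rcases Nat.lt_or_ge m k with h' | h'
    · rw [poch_succ, ih h', zero_mul]
    · have : m = k := by omega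
      subst this
      rw [poch_succ]
      simp

/-- shift of a coefficient sequence -/
def shf (f : ℕ → ℂ) : ℕ → ℂ
  | 0 => 0
  | j+1 => f j

@[simp] lemma shf_zero (f : ℕ → ℂ) : shf f 0 = 0 := rfl
@[simp] lemma shf_succ (f : ℕ → ℂ) (j : ℕ) : shf f (j+1) = f j := rfl

lemma sum_shift (f : ℕ → ℂ) (w : ℂ) (N : ℕ) (hN : f N = 0) :
    w * ∑ k ∈ range (N+1), f k * w^k = ∑ k ∈ range (N+1), shf f k * w^k := by
  rw [Finset.sum_range_succ' (fun k => shf f k * w^k) N]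
  rw [Finset.mul_sum, Finset.sum_range_succ]
  simp [hN, pow_succ]
  exact Finset.sum_congr rfl fun k _ => by ring

lemma cl1 (u a : ℂ) (hu : u ≠ 0) : u*(a/u) = a := by field_simp
lemma cl2 (u v a b : ℂ) (hu : u ≠ 0) (hv : v ≠ 0) : u*v*(a/u*(b/v)) = a*b := by field_simp
lemma cl3 (s u v w a b : ℂ) (hs : s ≠ 0) (hu : u ≠ 0) (hv : v ≠ 0) :
    s*u*v*((w/s)*(a/u)*(b/v)) = w*a*b := by field_simp
lemma cl4 (u p s v q P a c : ℂ) (hu : u ≠ 0) (hp : p ≠ 0) (hs : s ≠ 0) (hv : v ≠ 0) :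
    u*p*s*v*((q/u)*(P/p)*((a/s*c)/v)) = q*P*a*c := by field_simp

lemma abstract_id0 (Pl P2 L M : ℂ) (hPl : Pl ≠ 0) (h1 : L+M ≠ 0) (h2 : L+M+1 ≠ 0) :
    P2*(2*L+M)*(2*L+M+1)/(Pl*(L+M)*(L+M+1))
      = 2*(P2*(2*L+M)/(Pl*(L+M))) - ((M+1)*(2*L+M)/((L+M)*(L+M+1)))*(P2/Pl) := by
  have hu1 : Pl*(L+M)*(L+M+1) ≠ 0 := mul_ne_zero (mul_ne_zero hPl h1) h2
  have hu2 : Pl*(L+M) ≠ 0 := mul_ne_zero hPl h1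
  have hu3 : (L+M)*(L+M+1) ≠ 0 := mul_ne_zero h1 h2
  apply mul_left_cancel₀ hu1
  have n1 := cl1 (Pl*(L+M)*(L+M+1)) (P2*(2*L+M)*(2*L+M+1)) hu1
  have n2 := cl1 (Pl*(L+M)) (P2*(2*L+M)) hu2
  have n3 := cl2 ((L+M)*(L+M+1)) Pl ((M+1)*(2*L+M)) P2 hu3 hPl
  linear_combination n1 - 2*(L+M+1)*n2 + n3

set_option maxHeartbeats 1000000 in
set_option maxRecDepth 8000 in
lemma abstract_id (Pl P2 X C D F L M J E i : ℂ)
    (hPl : Pl ≠ 0) (hD : D ≠ 0) (hF : F ≠ 0)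
    (h1 : L+M ≠ 0) (h2 : L+M+1 ≠ 0) (h3 : 2*L+J ≠ 0) (h4 : (J:ℂ)+1 ≠ 0) (h5 : M+1 ≠ 0) :
    P2*(2*L+M)*(2*L+M+1)/(Pl*(L+M)*(L+M+1)) *
        ((-(M+2))*X*(C*(L+E*i+J))/(D*(2*L+J)*((J+1)*F)))
      = 2*(P2*(2*L+M)/(Pl*(L+M))) *
            ((X*(-(M+1)+J))*(C*(L+E*i+J))/(D*(2*L+J)*((J+1)*F)))
        - (1+i*(E/(L+M+1)))*(P2*(2*L+M)/(Pl*(L+M)))*(X*C/(D*F))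
        - ((M+1)*(2*L+M)/((L+M)*(L+M+1)))*(P2/Pl)*
            ((X*((-(M+1)+J)*(-(M+1)+J+1))/(-(M+1)))*(C*(L+E*i+J))/(D*(2*L+J)*((J+1)*F)))
        + ((M+1)*(2*L+M)/((L+M)*(L+M+1)))*(P2/Pl)*((X*(-(M+1)+J)/(-(M+1)))*C/(D*F)) := by
  have hu1 : Pl*(L+M)*(L+M+1) ≠ 0 := mul_ne_zero (mul_ne_zero hPl h1) h2
  have hu2 : Pl*(L+M) ≠ 0 := mul_ne_zero hPl h1
  have hu3 : (L+M)*(L+M+1) ≠ 0 := mul_ne_zero h1 h2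
  have hv : D*(2*L+J)*((J+1)*F) ≠ 0 :=
    mul_ne_zero (mul_ne_zero hD h3) (mul_ne_zero h4 hF)
  have hv2 : D*F ≠ 0 := mul_ne_zero hD hF
  have hs : -(M+1) ≠ 0 := neg_ne_zero.mpr h5
  have hQ : Pl*(L+M)*(L+M+1)*(M+1)*D*(2*L+J)*(J+1)*F ≠ 0 :=
    mul_ne_zero (mul_ne_zero (mul_ne_zero (mul_ne_zero (mul_ne_zero (mul_ne_zero
      (mul_ne_zero hPl h1) h2) h5) hD) h3) h4) hF
  apply mul_left_cancel₀ hQ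
  have hE : (1+i*(E/(L+M+1))) = ((L+M+1)+i*E)/(L+M+1) := by
    field_simp
  rw [hE]
  have m1 := cl2 (Pl*(L+M)*(L+M+1)) (D*(2*L+J)*((J+1)*F))
      (P2*(2*L+M)*(2*L+M+1)) ((-(M+2))*X*(C*(L+E*i+J))) hu1 hv
  have m2 := cl2 (Pl*(L+M)) (D*(2*L+J)*((J+1)*F))
      (P2*(2*L+M)) ((X*(-(M+1)+J))*(C*(L+E*i+J))) hu2 hv
  have m3 := cl3 (L+M+1) (Pl*(L+M)) (D*F) ((L+M+1)+i*E) (P2*(2*L+M)) (X*C) h2 hu2 hv2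
  have m4 := cl4 ((L+M)*(L+M+1)) Pl (-(M+1)) (D*(2*L+J)*((J+1)*F))
      ((M+1)*(2*L+M)) P2 (X*((-(M+1)+J)*(-(M+1)+J+1))) (C*(L+E*i+J)) hu3 hPl hs hv
  have m5 := cl4 ((L+M)*(L+M+1)) Pl (-(M+1)) (D*F)
      ((M+1)*(2*L+M)) P2 (X*(-(M+1)+J)) C hu3 hPl hs hv2
  have n1 : Pl*(L+M)*(L+M+1)*(M+1)*D*(2*L+J)*(J+1)*F *
      (P2*(2*L+M)*(2*L+M+1)/(Pl*(L+M)*(L+M+1)) *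
        ((-(M+2))*X*(C*(L+E*i+J))/(D*(2*L+J)*((J+1)*F))))
      = (M+1)*(P2*(2*L+M)*(2*L+M+1)*((-(M+2))*X*(C*(L+E*i+J)))) := by
    linear_combination (M+1) * m1
  have n2 : Pl*(L+M)*(L+M+1)*(M+1)*D*(2*L+J)*(J+1)*F *
      (2*(P2*(2*L+M)/(Pl*(L+M))) *
        ((X*(-(M+1)+J))*(C*(L+E*i+J))/(D*(2*L+J)*((J+1)*F))))
      = 2*(L+M+1)*(M+1)*(P2*(2*L+M)*((X*(-(M+1)+J))*(C*(L+E*i+J)))) := by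
    linear_combination 2*(L+M+1)*(M+1) * m2
  have n3 : Pl*(L+M)*(L+M+1)*(M+1)*D*(2*L+J)*(J+1)*F *
      ((((L+M+1)+i*E)/(L+M+1))*(P2*(2*L+M)/(Pl*(L+M)))*(X*C/(D*F)))
      = (M+1)*(2*L+J)*(J+1)*(((L+M+1)+i*E)*(P2*(2*L+M))*(X*C)) := by
    linear_combination (M+1)*(2*L+J)*(J+1) * m3
  have n4 : Pl*(L+M)*(L+M+1)*(M+1)*D*(2*L+J)*(J+1)*F *
      (((M+1)*(2*L+M)/((L+M)*(L+M+1)))*(P2/Pl)*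
        ((X*((-(M+1)+J)*(-(M+1)+J+1))/(-(M+1)))*(C*(L+E*i+J))/(D*(2*L+J)*((J+1)*F))))
      = -(((M+1)*(2*L+M))*P2*(X*((-(M+1)+J)*(-(M+1)+J+1)))*(C*(L+E*i+J))) := by
    linear_combination -m4
  have n5 : Pl*(L+M)*(L+M+1)*(M+1)*D*(2*L+J)*(J+1)*F *
      (((M+1)*(2*L+M)/((L+M)*(L+M+1)))*(P2/Pl)*((X*(-(M+1)+J)/(-(M+1)))*C/(D*F)))
      = -((2*L+J)*(J+1)*(((M+1)*(2*L+M))*P2*(X*(-(M+1)+J))*C)) := by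
    linear_combination -((2*L+J)*(J+1)) * m5
  linear_combination n1 - n2 + n3 + n4 - n5

/-- the coefficient functions -/
noncomputable def Aa (lam eta : ℝ) (t : ℕ) (k : ℕ) : ℂ :=
  poch (-(t : ℂ)) k * poch ((lam : ℂ) + (eta : ℂ) * I) k /
    (poch (2 * lam) k * (Nat.factorial k : ℂ))

lemma RR_eq (lam eta : ℝ) (n : ℕ) (z : ℂ) :
    RR lam eta n z =
      (poch (2 * lam) n / poch (lam : ℂ) n) *
        ∑ k ∈ Finset.range (n + 1), Aa lam eta n k * (1 - z) ^ k := rfl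
set_option maxHeartbeats 2000000 in
set_option maxRecDepth 8000 in
lemma coeffAa (lam eta : ℝ) (hlam : 0 < lam) (m : ℕ) : ∀ k : ℕ,
    poch (2*(lam:ℂ)) (m+1+1) / poch (lam:ℂ) (m+1+1) * Aa lam eta (m+1+1) k
      = 2 * (poch (2*(lam:ℂ)) (m+1) / poch (lam:ℂ) (m+1)) * Aa lam eta (m+1) k
        - (1 + I*((eta:ℂ)/((lam:ℂ)+m+1))) * (poch (2*(lam:ℂ)) (m+1) / poch (lam:ℂ) (m+1)) *
            shf (Aa lam eta (m+1)) k
        - (((m:ℂ)+1)*(2*(lam:ℂ)+m)/(((lam:ℂ)+m)*((lam:ℂ)+m+1))) *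
            (poch (2*(lam:ℂ)) m / poch (lam:ℂ) m) * Aa lam eta m k
        + (((m:ℂ)+1)*(2*(lam:ℂ)+m)/(((lam:ℂ)+m)*((lam:ℂ)+m+1))) *
            (poch (2*(lam:ℂ)) m / poch (lam:ℂ) m) * shf (Aa lam eta m) k := by
  intro k
  have h2lam : (0:ℝ) < 2*lam := by linarith
  have hPl : poch (lam:ℂ) m ≠ 0 := poch_real_pos_ne lam hlam m
  have h1 : (lam:ℂ) + m ≠ 0 := cast_add_nat_ne lam hlam m
  have h2 : (lam:ℂ) + m + 1 ≠ 0 := by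
    have := cast_add_nat_ne lam hlam (m+1); push_cast at this
    rwa [← add_assoc] at this
  have h5 : ((m:ℂ) + 1) ≠ 0 := by
    have e : ((m:ℂ) + 1) = ((m+1:ℕ):ℂ) := by push_cast; ring
    rw [e]; exact_mod_cast Nat.succ_ne_zero m
  have gp2 : poch (2*(lam:ℂ)) (m+1+1)
      = poch (2*(lam:ℂ)) m * (2*(lam:ℂ)+m) * (2*(lam:ℂ)+m+1) := by
    rw [poch_succ, poch_succ]; push_cast; ring
  have gpl2 : poch ((lam:ℂ)) (m+1+1)
      = poch ((lam:ℂ)) m * ((lam:ℂ)+m) * ((lam:ℂ)+m+1) := by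
    rw [poch_succ, poch_succ]; push_cast; ring
  have gp1 : poch (2*(lam:ℂ)) (m+1) = poch (2*(lam:ℂ)) m * (2*(lam:ℂ)+m) := poch_succ _ _
  have gpl1 : poch ((lam:ℂ)) (m+1) = poch ((lam:ℂ)) m * ((lam:ℂ)+m) := poch_succ _ _
  have hA : ((m+1+1:ℕ):ℂ) = (m:ℂ)+2 := by push_cast; ring
  have hB : ((m+1:ℕ):ℂ) = (m:ℂ)+1 := by push_cast; ring
  cases k with
  | zero =>
    simp only [shf_zero, Aa, poch_zero, Nat.factorial_zero, Nat.cast_one, mul_zero,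
      one_mul, mul_one, div_one, sub_zero, add_zero]
    rw [gp2, gpl2, gp1, gpl1]
    linear_combination abstract_id0 (poch (lam:ℂ) m) (poch (2*(lam:ℂ)) m)
      (lam:ℂ) (m:ℂ) hPl h1 h2
  | succ j =>
    have h4 : ((j:ℂ) + 1) ≠ 0 := by
      have e : ((j:ℂ) + 1) = ((j+1:ℕ):ℂ) := by push_cast; ring
      rw [e]; exact_mod_cast Nat.succ_ne_zero j
    have hF : ((j.factorial : ℂ)) ≠ 0 := by exact_mod_cast j.factorial_ne_zero
    have h3 : 2*(lam:ℂ) + j ≠ 0 := by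
      have := cast_add_nat_ne (2*lam) h2lam j; push_cast at this; exact this
    have hD : poch (2*(lam:ℂ)) j ≠ 0 := by
      have := poch_real_pos_ne (2*lam) h2lam j
      have e : ((2*lam:ℝ):ℂ) = 2*(lam:ℂ) := by push_cast; ring
      rwa [e] at this
  -- pochhammer recursions
    have g1 : poch (-((m:ℂ)+2)) (j+1) = -((m:ℂ)+2) * poch (-((m:ℂ)+1)) j := by
      rw [poch_succ_left, show -((m:ℂ)+2)+1 = -((m:ℂ)+1) from by ring]
    have g2 : poch (-((m:ℂ)+1)) (j+1) = poch (-((m:ℂ)+1)) j * (-((m:ℂ)+1)+j) := poch_succ _ _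
    have g7 : poch (-(m:ℂ)) j
        = poch (-((m:ℂ)+1)) j * (-((m:ℂ)+1)+j) / (-((m:ℂ)+1)) := by
      have b1 : poch (-((m:ℂ)+1)) (j+1) = -((m:ℂ)+1) * poch (-(m:ℂ)) j := by
        rw [poch_succ_left, show -((m:ℂ)+1)+1 = -((m:ℂ)) from by ring]
      have hne : -((m:ℂ)+1) ≠ 0 := neg_ne_zero.mpr h5
      rw [eq_div_iff hne]
      linear_combination g2 - b1
    have g3 : poch (-(m:ℂ)) (j+1) = poch (-(m:ℂ)) j * (-(m:ℂ)+j) := poch_succ _ _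
    have g4 : poch ((lam:ℂ)+(eta:ℂ)*I) (j+1)
        = poch ((lam:ℂ)+(eta:ℂ)*I) j * ((lam:ℂ)+(eta:ℂ)*I+j) := poch_succ _ _
    have g5 : poch (2*(lam:ℂ)) (j+1) = poch (2*(lam:ℂ)) j * (2*(lam:ℂ)+j) := poch_succ _ _
    have g6 : (((j+1).factorial : ℕ):ℂ) = ((j:ℂ)+1) * ((j.factorial : ℕ):ℂ) := by
      rw [Nat.factorial_succ]; push_cast; ring
    simp only [shf_succ, Aa]
    rw [hA, hB, g1, g2, g3, g7, g4, g5, g6, gp2, gpl2, gp1, gpl1]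
    linear_combination abstract_id (poch (lam:ℂ) m) (poch (2*(lam:ℂ)) m)
      (poch (-((m:ℂ)+1)) j) (poch ((lam:ℂ)+(eta:ℂ)*I) j) (poch (2*(lam:ℂ)) j)
      ((j.factorial : ℕ):ℂ) (lam:ℂ) (m:ℂ) (j:ℂ) (eta:ℂ) I hPl hD hF h1 h2 h3 h4 h5
set_option maxHeartbeats 1000000 in
lemma keyRR (lam eta : ℝ) (hlam : 0 < lam) (m : ℕ) (z : ℂ) :
    RR lam eta (m+1+1) z
      = (2 - (1 + I*((eta:ℂ)/((lam:ℂ)+m+1)))*(1-z)) * RR lam eta (m+1) z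
        - (((m:ℂ)+1)*(2*(lam:ℂ)+m)/(((lam:ℂ)+m)*((lam:ℂ)+m+1))) * z * RR lam eta m z := by
  rw [RR_eq, RR_eq, RR_eq]
  set w : ℂ := 1 - z with hw
  rw [show z = 1 - w from by rw [hw]; ring]
  -- vanishing top coefficients
  have z1 : Aa lam eta (m+1) (m+1+1) = 0 := by
    rw [Aa, poch_neg_nat_eq_zero (m+1) (m+1+1) (by omega), zero_mul, zero_div]
  have z0a : Aa lam eta m (m+1) = 0 := by
    rw [Aa, poch_neg_nat_eq_zero m (m+1) (by omega), zero_mul, zero_div]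
  have z0b : Aa lam eta m (m+1+1) = 0 := by
    rw [Aa, poch_neg_nat_eq_zero m (m+1+1) (by omega), zero_mul, zero_div]
  -- extend sums to range (m+1+1+1)
  have ext1 : ∑ k ∈ range (m+1+1), Aa lam eta (m+1) k * w^k
      = ∑ k ∈ range (m+1+1+1), Aa lam eta (m+1) k * w^k := by
    rw [Finset.sum_range_succ (fun k => Aa lam eta (m+1) k * w^k) (m+1+1)]
    simp [z1]
  have ext0 : ∑ k ∈ range (m+1), Aa lam eta m k * w^k
      = ∑ k ∈ range (m+1+1+1), Aa lam eta m k * w^k := by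
    rw [Finset.sum_range_succ (fun k => Aa lam eta m k * w^k) (m+1+1),
      Finset.sum_range_succ (fun k => Aa lam eta m k * w^k) (m+1)]
    simp [z0a, z0b]
  rw [ext1, ext0]
  have sh1 : w * ∑ k ∈ range (m+1+1+1), Aa lam eta (m+1) k * w^k
      = ∑ k ∈ range (m+1+1+1), shf (Aa lam eta (m+1)) k * w^k :=
    sum_shift (Aa lam eta (m+1)) w (m+1+1) z1
  have sh0 : w * ∑ k ∈ range (m+1+1+1), Aa lam eta m k * w^k
      = ∑ k ∈ range (m+1+1+1), shf (Aa lam eta m) k * w^k :=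
    sum_shift (Aa lam eta m) w (m+1+1) z0b
  calc poch (2*(lam:ℂ)) (m+1+1) / poch (lam:ℂ) (m+1+1) *
          ∑ k ∈ range (m+1+1+1), Aa lam eta (m+1+1) k * w^k
      = ∑ k ∈ range (m+1+1+1),
          (2 * (poch (2*(lam:ℂ)) (m+1) / poch (lam:ℂ) (m+1)) * Aa lam eta (m+1) k
            - (1 + I*((eta:ℂ)/((lam:ℂ)+m+1))) *
                (poch (2*(lam:ℂ)) (m+1) / poch (lam:ℂ) (m+1)) * shf (Aa lam eta (m+1)) k
            - (((m:ℂ)+1)*(2*(lam:ℂ)+m)/(((lam:ℂ)+m)*((lam:ℂ)+m+1))) *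
                (poch (2*(lam:ℂ)) m / poch (lam:ℂ) m) * Aa lam eta m k
            + (((m:ℂ)+1)*(2*(lam:ℂ)+m)/(((lam:ℂ)+m)*((lam:ℂ)+m+1))) *
                (poch (2*(lam:ℂ)) m / poch (lam:ℂ) m) * shf (Aa lam eta m) k) * w^k := by
        rw [Finset.mul_sum]
        refine Finset.sum_congr rfl fun k _ => ?_
        linear_combination (w^k) * coeffAa lam eta hlam m k
    _ = (2 - (1 + I*((eta:ℂ)/((lam:ℂ)+m+1)))*w) *
          (poch (2*(lam:ℂ)) (m+1) / poch (lam:ℂ) (m+1) *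
            ∑ k ∈ range (m+1+1+1), Aa lam eta (m+1) k * w^k)
        - (((m:ℂ)+1)*(2*(lam:ℂ)+m)/(((lam:ℂ)+m)*((lam:ℂ)+m+1))) * (1-w) *
          (poch (2*(lam:ℂ)) m / poch (lam:ℂ) m *
            ∑ k ∈ range (m+1+1+1), Aa lam eta m k * w^k) := by
        have expand : (2 - (1 + I*((eta:ℂ)/((lam:ℂ)+m+1)))*w) *
              (poch (2*(lam:ℂ)) (m+1) / poch (lam:ℂ) (m+1) *
                ∑ k ∈ range (m+1+1+1), Aa lam eta (m+1) k * w^k)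
            - (((m:ℂ)+1)*(2*(lam:ℂ)+m)/(((lam:ℂ)+m)*((lam:ℂ)+m+1))) * (1-w) *
              (poch (2*(lam:ℂ)) m / poch (lam:ℂ) m *
                ∑ k ∈ range (m+1+1+1), Aa lam eta m k * w^k)
            = 2 * (poch (2*(lam:ℂ)) (m+1) / poch (lam:ℂ) (m+1)) *
                (∑ k ∈ range (m+1+1+1), Aa lam eta (m+1) k * w^k)
              - (1 + I*((eta:ℂ)/((lam:ℂ)+m+1))) *
                  (poch (2*(lam:ℂ)) (m+1) / poch (lam:ℂ) (m+1)) *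
                  (w * ∑ k ∈ range (m+1+1+1), Aa lam eta (m+1) k * w^k)
              - (((m:ℂ)+1)*(2*(lam:ℂ)+m)/(((lam:ℂ)+m)*((lam:ℂ)+m+1))) *
                  (poch (2*(lam:ℂ)) m / poch (lam:ℂ) m) *
                  (∑ k ∈ range (m+1+1+1), Aa lam eta m k * w^k)
              + (((m:ℂ)+1)*(2*(lam:ℂ)+m)/(((lam:ℂ)+m)*((lam:ℂ)+m+1))) *
                  (poch (2*(lam:ℂ)) m / poch (lam:ℂ) m) *
                  (w * ∑ k ∈ range (m+1+1+1), Aa lam eta m k * w^k) := by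
          ring
        rw [expand, sh1, sh0, Finset.mul_sum, Finset.mul_sum, Finset.mul_sum,
          Finset.mul_sum, ← Finset.sum_sub_distrib, ← Finset.sum_sub_distrib,
          ← Finset.sum_add_distrib]
        refine Finset.sum_congr rfl fun k _ => ?_
        ring
theorem stmt7 (lam eta : ℝ) (hlam : 0 < lam) :
    (∀ z : ℂ, RR lam eta 0 z = 1) ∧
      (∀ z : ℂ, RR lam eta 1 z =
        (1 + I * (cSeq lam eta 1 : ℂ)) * z + (1 - I * (cSeq lam eta 1 : ℂ))) ∧
      ∀ n : ℕ, 1 ≤ n → ∀ z : ℂ,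
        RR lam eta (n + 1) z =
          ((1 + I * (cSeq lam eta (n + 1) : ℂ)) * z +
              (1 - I * (cSeq lam eta (n + 1) : ℂ))) * RR lam eta n z -
            4 * (dSeq lam (n + 1) : ℂ) * z * RR lam eta (n - 1) z := by
  refine ⟨?_, ?_, ?_⟩
  · intro z
    norm_num [RR, poch_zero, Finset.sum_range_one]
  · intro z
    have hl : (lam:ℂ) ≠ 0 := by exact_mod_cast hlam.ne'
    have hc : ((cSeq lam eta 1 : ℝ) : ℂ) = (eta:ℂ)/(lam:ℂ) := by
      rw [cSeq]; push_cast; ring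
    rw [hc]
    simp only [RR, Finset.sum_range_succ, Finset.sum_range_one, poch_zero, poch_one,
      Nat.factorial_zero, Nat.factorial_one, Nat.cast_one]
    field_simp
    ring
  · intro n hn z
    obtain ⟨m, rfl⟩ : ∃ m, n = m + 1 := ⟨n-1, by omega⟩
    have hkey := keyRR lam eta hlam m z
    have hc : ((cSeq lam eta (m+1+1) : ℝ) : ℂ) = (eta:ℂ)/((lam:ℂ)+m+1) := by
      rw [cSeq]; push_cast; ring
    have h1 : (lam:ℂ) + m ≠ 0 := cast_add_nat_ne lam hlam m
    have h2 : (lam:ℂ) + m + 1 ≠ 0 := by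
      have := cast_add_nat_ne lam hlam (m+1); push_cast at this
      rwa [← add_assoc] at this
    have e1 : lam + ((m+1+1:ℕ):ℝ) - 2 = lam + m := by push_cast; ring
    have e2 : lam + ((m+1+1:ℕ):ℝ) - 1 = lam + m + 1 := by push_cast; ring
    have e3 : ((m+1+1:ℕ):ℝ) - 1 = (m:ℝ) + 1 := by push_cast; ring
    have e4 : 2*lam + ((m+1+1:ℕ):ℝ) - 2 = 2*lam + m := by push_cast; ring
    have hre : dSeq lam (m+1+1) = ((m:ℝ)+1)*(2*lam+m)/(4*(lam+m)*(lam+m+1)) := by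
      rw [dSeq, e1, e2, e4, e3]
    have hd : (4:ℂ)*((dSeq lam (m+1+1) : ℝ) : ℂ)
        = ((m:ℂ)+1)*(2*(lam:ℂ)+m)/(((lam:ℂ)+m)*((lam:ℂ)+m+1)) := by
      rw [hre]
      push_cast
      rw [← mul_div_assoc]
      rw [div_eq_div_iff (mul_ne_zero (mul_ne_zero (by norm_num) h1) h2) (mul_ne_zero h1 h2)]
      ring
    simp only [Nat.add_sub_cancel]
    linear_combination hkey - I*(z-1)*(RR lam eta (m+1) z)*hc + z*(RR lam eta m z)*hd
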